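/- arXiv:1706.09087 — 2 statements merged into one kernel-verified Lean document; each statement's English description precedes it below -/
import Mathlib

section
/- Let n, m, s, k be positive integers with s ≤ n and k ≤ m, let A ∈ ℂ^{m×n}, and set Θ = [A, I_m] ∈ ℂ^{m×(n+m)}. Let T = {(x,z) : x ∈ ℂⁿ, z ∈ ℂᵐ, ‖x‖₂² + ‖z‖₂² = 1, ‖x‖₀ ≤ s, ‖z‖₀ ≤ k} and D_{s,n} = {x ∈ ℂⁿ : ‖x‖₂ ≤ 1, ‖x‖₀ ≤ s}. Then the (s,k)-restricted isometry constant of Θ satisfies δ_{s,k}(Θ) ≤ sup_{x ∈ D_{s,n}} | ‖A x‖₂² − ‖x‖₂² | + 2 · sup_{(x,z) ∈ T} |⟨A x, z⟩|, where ⟨·,·⟩ is the Hermitian inner product on ℂᵐ. -/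
open MeasureTheory ProbabilityTheory Matrix Finset

/-- The ℓ₂ norm of a complex vector. -/
noncomputable def l2norm {n : ℕ} (x : Fin n → ℂ) : ℝ := Real.sqrt (∑ i, ‖x i‖ ^ 2)

/-- The ℓ₁ norm of a complex vector. -/
noncomputable def l1norm {n : ℕ} (x : Fin n → ℂ) : ℝ := ∑ i, ‖x i‖

/-- A vector is `s`-sparse if it has at most `s` nonzero entries. -/
def Sparse {n : ℕ} (s : ℕ) (x : Fin n → ℂ) : Prop :=
  (Finset.univ.filter fun i => x i ≠ 0).card ≤ s

/-- Best `s`-term approximation error in ℓ₁. -/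
noncomputable def sigma1 {n : ℕ} (s : ℕ) (x : Fin n → ℂ) : ℝ :=
  sInf {t : ℝ | ∃ x' : Fin n → ℂ, Sparse s x' ∧ t = l1norm (x - x')}

/-- The coherence of a matrix: the largest absolute value of an entry. -/
noncomputable def coh {a b : ℕ} (M : Matrix (Fin a) (Fin b) ℂ) : ℝ :=
  sSup {r : ℝ | ∃ i j, r = ‖M i j‖}

/-- Horizontal concatenation of two matrices. -/
def hcat {m n p : ℕ} (A : Matrix (Fin m) (Fin n) ℂ) (H : Matrix (Fin m) (Fin p) ℂ) :
    Matrix (Fin m) (Fin (n + p)) ℂ :=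
  Matrix.of fun i j => Fin.addCases (fun j₁ => A i j₁) (fun j₂ => H i j₂) j

/-- The (s,k)-restricted isometry constant of Θ ∈ ℂ^{m×(n+p)}. -/
noncomputable def RIPconst (m n p s k : ℕ) (Θ : Matrix (Fin m) (Fin (n + p)) ℂ) : ℝ :=
  sInf {δ : ℝ | 0 ≤ δ ∧ ∀ (x : Fin n → ℂ) (z : Fin p → ℂ), Sparse s x → Sparse k z →
    (1 - δ) * (l2norm x ^ 2 + l2norm z ^ 2) ≤ l2norm (Θ.mulVec (Fin.append x z)) ^ 2 ∧
    l2norm (Θ.mulVec (Fin.append x z)) ^ 2 ≤ (1 + δ) * (l2norm x ^ 2 + l2norm z ^ 2)}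

/-! By homogeneity it suffices to bound `|‖Θ [x; z]‖² - 1|` on unit vectors. There
`Θ [x; z] = A x + z`, so `‖Θ [x; z]‖² - 1 = (‖A x‖² - ‖x‖²) + 2 Re ⟨A x, z⟩`, and the two terms
are bounded by the two suprema, which are finite since `A` is bounded on `ℓ²`. -/

open scoped InnerProductSpace

lemma l2norm_nonneg {n : ℕ} (x : Fin n → ℂ) : 0 ≤ l2norm x := Real.sqrt_nonneg _

lemma l2norm_eq_norm {n : ℕ} (x : Fin n → ℂ) :
    l2norm x = ‖(WithLp.toLp 2 x : EuclideanSpace ℂ (Fin n))‖ := by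
  rw [EuclideanSpace.norm_eq]; rfl

lemma sum_star_mul_eq_inner {n : ℕ} (u v : Fin n → ℂ) :
    ∑ i, star (u i) * v i = ⟪(WithLp.toLp 2 u : EuclideanSpace ℂ (Fin n)), WithLp.toLp 2 v⟫_ℂ := by
  simp [EuclideanSpace.inner_toLp_toLp, dotProduct, mul_comm]

lemma l2norm_smul {n : ℕ} (c : ℂ) (x : Fin n → ℂ) : l2norm (c • x) = ‖c‖ * l2norm x := by
  simp only [l2norm_eq_norm, WithLp.toLp_smul, norm_smul]

lemma l2norm_eq_zero {n : ℕ} {x : Fin n → ℂ} : l2norm x = 0 ↔ x = 0 := by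
  rw [l2norm_eq_norm, norm_eq_zero, WithLp.toLp_eq_zero]

lemma l2norm_add_sq {n : ℕ} (u v : Fin n → ℂ) :
    l2norm (u + v) ^ 2 = l2norm u ^ 2 + l2norm v ^ 2 + 2 * (∑ i, star (u i) * v i).re := by
  rw [l2norm_eq_norm, l2norm_eq_norm, l2norm_eq_norm, sum_star_mul_eq_inner, WithLp.toLp_add,
    norm_add_sq (𝕜 := ℂ), RCLike.re_to_complex]
  ring

lemma Sparse.smul {n s : ℕ} {x : Fin n → ℂ} (hx : Sparse s x) (c : ℂ) : Sparse s (c • x) :=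
  (Finset.card_le_card (Finset.monotone_filter_right _ fun _ _ => right_ne_zero_of_mul)).trans hx

lemma Fin.append_smul {M α : Type*} [SMul M α] {n p : ℕ} (c : M) (x : Fin n → α)
    (z : Fin p → α) :
    Fin.append (c • x) (c • z) = c • Fin.append x z := by
  ext i
  refine Fin.addCases (fun j => ?_) (fun j => ?_) i <;> simp

lemma hcat_one_mulVec_append {m n : ℕ} (A : Matrix (Fin m) (Fin n) ℂ) (x : Fin n → ℂ)
    (z : Fin m → ℂ) : hcat A 1 *ᵥ Fin.append x z = A *ᵥ x + z := by
  ext i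
  simp [hcat, mulVec, dotProduct, Fin.sum_univ_add, one_apply]

lemma RIPconst_le_of_forall_unit {m n p s k : ℕ} {Θ : Matrix (Fin m) (Fin (n + p)) ℂ} {δ : ℝ}
    (hδ : 0 ≤ δ)
    (h : ∀ (x : Fin n → ℂ) (z : Fin p → ℂ), Sparse s x → Sparse k z →
      l2norm x ^ 2 + l2norm z ^ 2 = 1 → |l2norm (Θ *ᵥ Fin.append x z) ^ 2 - 1| ≤ δ) :
    RIPconst m n p s k Θ ≤ δ := by
  refine csInf_le ⟨0, fun _ h => h.1⟩ ⟨hδ, fun x z hx hz => ?_⟩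
  set N := l2norm x ^ 2 + l2norm z ^ 2
  suffices |l2norm (Θ *ᵥ Fin.append x z) ^ 2 - N| ≤ δ * N by
    rw [abs_sub_le_iff] at this
    constructor <;> linarith
  obtain hN | hN := (show 0 ≤ N by positivity).eq_or_lt
  · have hx0 : x = 0 := l2norm_eq_zero.mp (by nlinarith [l2norm_nonneg x, l2norm_nonneg z])
    have hz0 : z = 0 := l2norm_eq_zero.mp (by nlinarith [l2norm_nonneg x, l2norm_nonneg z])
    have hxz0 : Fin.append x z = 0 := by
      ext i
      refine Fin.addCases (fun j => ?_) (fun j => ?_) i <;> simp [hx0, hz0]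
    simp [← hN, hxz0, l2norm]
  · set c : ℂ := (((√N)⁻¹ : ℝ) : ℂ)
    have hc : ‖c‖ ^ 2 = N⁻¹ := by
      rw [Complex.norm_real, Real.norm_eq_abs, sq_abs, inv_pow, Real.sq_sqrt hN.le]
    have hunit := h (c • x) (c • z) (hx.smul c) (hz.smul c) (by
      rw [l2norm_smul, l2norm_smul, mul_pow, mul_pow, hc, ← mul_add, inv_mul_cancel₀ hN.ne'])
    rw [Fin.append_smul, mulVec_smul, l2norm_smul, mul_pow, hc] at hunit
    calc |l2norm (Θ *ᵥ Fin.append x z) ^ 2 - N|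
        = N * |N⁻¹ * l2norm (Θ *ᵥ Fin.append x z) ^ 2 - 1| := by
          rw [← abs_of_pos hN, ← abs_mul, abs_of_pos hN, mul_sub, mul_inv_cancel_left₀ hN.ne',
            mul_one]
      _ ≤ δ * N := by rw [mul_comm δ]; exact mul_le_mul_of_nonneg_left hunit hN.le

open scoped Matrix.Norms.L2Operator in
lemma exists_l2norm_mulVec_le {m n : ℕ} (A : Matrix (Fin m) (Fin n) ℂ) :
    ∃ C, 0 ≤ C ∧ ∀ x, l2norm (A *ᵥ x) ≤ C * l2norm x :=
  ⟨‖A‖, norm_nonneg A, fun x => by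
    rw [l2norm_eq_norm, l2norm_eq_norm]
    exact A.l2_opNorm_mulVec (WithLp.toLp 2 x)⟩

lemma bddAbove_abs_l2norm_mulVec_sq_sub {m n : ℕ} (A : Matrix (Fin m) (Fin n) ℂ) (s : ℕ) :
    BddAbove {t : ℝ | ∃ x : Fin n → ℂ, l2norm x ≤ 1 ∧ Sparse s x ∧
      t = |l2norm (A *ᵥ x) ^ 2 - l2norm x ^ 2|} := by
  obtain ⟨C, hC0, hC⟩ := exists_l2norm_mulVec_le A
  refine ⟨C ^ 2 + 1, ?_⟩
  rintro _ ⟨x, hx, -, rfl⟩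
  have hAx : l2norm (A *ᵥ x) ≤ C := (hC x).trans (mul_le_of_le_one_right hC0 hx)
  have := l2norm_nonneg (A *ᵥ x)
  have := l2norm_nonneg x
  exact abs_sub_le_of_nonneg_of_le (by positivity) (by nlinarith) (by positivity) (by nlinarith)

lemma bddAbove_norm_sum_star_mulVec_mul {m n : ℕ} (A : Matrix (Fin m) (Fin n) ℂ) (s k : ℕ) :
    BddAbove {t : ℝ | ∃ (x : Fin n → ℂ) (z : Fin m → ℂ),
      l2norm x ^ 2 + l2norm z ^ 2 = 1 ∧ Sparse s x ∧ Sparse k z ∧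
      t = ‖∑ i, star ((A *ᵥ x) i) * z i‖} := by
  obtain ⟨C, hC0, hC⟩ := exists_l2norm_mulVec_le A
  refine ⟨C, ?_⟩
  rintro _ ⟨x, z, hxz, -, -, rfl⟩
  have hx : l2norm x ≤ 1 := by nlinarith [l2norm_nonneg x, l2norm_nonneg z]
  have hz : l2norm z ≤ 1 := by nlinarith [l2norm_nonneg x, l2norm_nonneg z]
  calc ‖∑ i, star ((A *ᵥ x) i) * z i‖ ≤ l2norm (A *ᵥ x) * l2norm z := by
        rw [sum_star_mul_eq_inner, l2norm_eq_norm, l2norm_eq_norm]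
        exact norm_inner_le_norm _ _
    _ ≤ (C * 1) * 1 :=
        mul_le_mul ((hC x).trans (by gcongr)) hz (l2norm_nonneg z) (by positivity)
    _ = C := by ring

theorem stmt_7_general (n m s k : ℕ)
    (A : Matrix (Fin m) (Fin n) ℂ) :
    RIPconst m n m s k (hcat A 1) ≤
      sSup {t : ℝ | ∃ x : Fin n → ℂ, l2norm x ≤ 1 ∧ Sparse s x ∧
          t = |l2norm (A.mulVec x) ^ 2 - l2norm x ^ 2|} +
        2 * sSup {t : ℝ | ∃ (x : Fin n → ℂ) (z : Fin m → ℂ),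
          l2norm x ^ 2 + l2norm z ^ 2 = 1 ∧ Sparse s x ∧ Sparse k z ∧
          t = ‖∑ i, star (A.mulVec x i) * z i‖} := by
  refine RIPconst_le_of_forall_unit
    (add_nonneg (Real.sSup_nonneg ?_) (mul_nonneg zero_le_two (Real.sSup_nonneg ?_)))
    fun x z hx hz hxz => ?_
  · rintro _ ⟨x, -, -, rfl⟩
    exact abs_nonneg _
  · rintro _ ⟨x, z, -, -, -, rfl⟩
    exact norm_nonneg _
  have hgram := le_csSup (bddAbove_abs_l2norm_mulVec_sq_sub A s)
    ⟨x, by nlinarith [l2norm_nonneg x, l2norm_nonneg z], hx, rfl⟩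
  have hcross := le_csSup (bddAbove_norm_sum_star_mulVec_mul A s k) ⟨x, z, hxz, hx, hz, rfl⟩
  have hre := Complex.abs_re_le_norm (∑ i, star ((A *ᵥ x) i) * z i)
  rw [hcat_one_mulVec_append, l2norm_add_sq]
  rw [abs_le] at hgram hre ⊢
  constructor <;> linarith

/-- splitting of the (s,k)-RIP constant of Θ = [A, I] into a standard RIP
term plus twice the supremum of the cross inner-product term (equation (9)). -/
theorem stmt_7 (n m s k : ℕ) (hn : 0 < n) (hm : 0 < m)
    (hs : 0 < s) (hsn : s ≤ n) (hk : 0 < k) (hkm : k ≤ m)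
    (A : Matrix (Fin m) (Fin n) ℂ) :
    RIPconst m n m s k (hcat A 1) ≤
      sSup {t : ℝ | ∃ x : Fin n → ℂ, l2norm x ≤ 1 ∧ Sparse s x ∧
          t = |l2norm (A.mulVec x) ^ 2 - l2norm x ^ 2|} +
        2 * sSup {t : ℝ | ∃ (x : Fin n → ℂ) (z : Fin m → ℂ),
          l2norm x ^ 2 + l2norm z ^ 2 = 1 ∧ Sparse s x ∧ Sparse k z ∧
          t = ‖∑ i, star (A.mulVec x i) * z i‖} :=
  stmt_7_general n m s k A
end

section
/- Let m, ñ, n, k be positive integers, let U ∈ ℂ^{m×ñ}, and let B̃ ∈ ℂ^{ñ×n} satisfy B̃*B̃ = I_n. Then for every x ∈ ℂⁿ and every k-sparse z ∈ ℂᵐ, the vector v = (z* U diag(B̃ x))* ∈ ℂ^ñ satisfies ‖v‖₂ ≤ μ(U) · √k · ‖x‖₂ · ‖z‖₂. -/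
open MeasureTheory ProbabilityTheory Matrix Finset

/-!
Every entry of `z* U` is at most `μ(U) ‖z‖₁ ≤ μ(U) √k ‖z‖₂` (Cauchy–Schwarz on the support of `z`),
so `‖v‖₂ ≤ μ(U) ‖z‖₁ ‖B̃ x‖₂`, and `B̃` is an isometry because `B̃* B̃ = I`.
-/

lemma norm_le_coh {a b : ℕ} (M : Matrix (Fin a) (Fin b) ℂ) (i : Fin a) (j : Fin b) :
    ‖M i j‖ ≤ coh M :=
  le_csSup ((Set.finite_range fun p : Fin a × Fin b => ‖M p.1 p.2‖).subset
    (by rintro _ ⟨i, j, rfl⟩; exact ⟨(i, j), rfl⟩)).bddAbove ⟨i, j, rfl⟩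

lemma coh_nonneg {a b : ℕ} (M : Matrix (Fin a) (Fin b) ℂ) : 0 ≤ coh M :=
  Real.sSup_nonneg (by rintro _ ⟨i, j, rfl⟩; positivity)

lemma l2norm_eq_sqrt_re_star_dotProduct {n : ℕ} (x : Fin n → ℂ) :
    l2norm x = √(star x ⬝ᵥ x).re := by
  simp only [l2norm, dotProduct, Complex.re_sum, Pi.star_apply, Complex.star_def,
    Complex.conj_mul', ← Complex.ofReal_pow, Complex.ofReal_re]

lemma l2norm_mulVec_of_conjTranspose_mul_self_eq_one {nt n : ℕ} {B : Matrix (Fin nt) (Fin n) ℂ}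
    (hB : Bᴴ * B = 1) (x : Fin n → ℂ) : l2norm (B *ᵥ x) = l2norm x := by
  rw [l2norm_eq_sqrt_re_star_dotProduct, l2norm_eq_sqrt_re_star_dotProduct, star_mulVec,
    dotProduct_mulVec, vecMul_vecMul, hB, vecMul_one]

lemma l2norm_le_mul_of_norm_le {n : ℕ} {v w : Fin n → ℂ} {C : ℝ} (hC : 0 ≤ C)
    (h : ∀ j, ‖v j‖ ≤ C * ‖w j‖) : l2norm v ≤ C * l2norm w := by
  rw [l2norm, l2norm, ← Real.sqrt_sq hC, ← Real.sqrt_mul (sq_nonneg C), Finset.mul_sum]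
  gcongr with j
  rw [← mul_pow]
  exact pow_le_pow_left₀ (norm_nonneg _) (h j) 2

lemma l1norm_le_sqrt_mul_l2norm {n k : ℕ} {z : Fin n → ℂ} (hz : Sparse k z) :
    l1norm z ≤ √k * l2norm z := by
  set T := univ.filter fun i => z i ≠ 0
  have hl1 : l1norm z = ∑ i ∈ T, ‖z i‖ := by
    rw [l1norm, Finset.sum_filter_of_ne]; intro i _ h; simpa using h
  have hl2 : ∑ i ∈ T, ‖z i‖ ^ 2 ≤ ∑ i, ‖z i‖ ^ 2 :=
    Finset.sum_le_sum_of_subset_of_nonneg (subset_univ T) fun i _ _ => by positivity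
  have hT : (#T : ℝ) ≤ k := by exact_mod_cast hz
  rw [hl1, l2norm, ← Real.sqrt_mul (Nat.cast_nonneg k)]
  refine Real.le_sqrt_of_sq_le ((sq_sum_le_card_mul_sum_sq ..).trans ?_)
  gcongr

lemma norm_sum_star_mul_le_coh_mul_l1norm {m nt : ℕ} (U : Matrix (Fin m) (Fin nt) ℂ)
    (z : Fin m → ℂ) (j : Fin nt) : ‖∑ i, star (z i) * U i j‖ ≤ coh U * l1norm z :=
  calc ‖∑ i, star (z i) * U i j‖ ≤ ∑ i, ‖z i‖ * coh U := by
        refine (norm_sum_le _ _).trans (Finset.sum_le_sum fun i _ => ?_)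
        rw [norm_mul, norm_star]
        exact mul_le_mul_of_nonneg_left (norm_le_coh U i j) (norm_nonneg _)
    _ = coh U * l1norm z := by rw [l1norm, ← Finset.sum_mul, mul_comm]

theorem stmt_9_general (m nt n k : ℕ)
    (U : Matrix (Fin m) (Fin nt) ℂ)
    (B : Matrix (Fin nt) (Fin n) ℂ) (hB : Bᴴ * B = 1)
    (x : Fin n → ℂ) (z : Fin m → ℂ) (hz : Sparse k z) :
    l2norm (fun j => star ((∑ i, star (z i) * U i j) * B.mulVec x j)) ≤
      coh U * Real.sqrt k * l2norm x * l2norm z := by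
  have hC : 0 ≤ coh U * l1norm z :=
    mul_nonneg (coh_nonneg U) (Finset.sum_nonneg fun i _ => norm_nonneg _)
  calc _ ≤ coh U * l1norm z * l2norm (B *ᵥ x) :=
        l2norm_le_mul_of_norm_le hC fun j => by
          rw [norm_star, norm_mul]
          exact mul_le_mul_of_nonneg_right (norm_sum_star_mul_le_coh_mul_l1norm U z j)
            (norm_nonneg _)
    _ = coh U * l2norm x * l1norm z := by
        rw [l2norm_mulVec_of_conjTranspose_mul_self_eq_one hB]; ring
    _ ≤ coh U * l2norm x * (√k * l2norm z) := by
        gcongr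
        · exact mul_nonneg (coh_nonneg U) (Real.sqrt_nonneg _)
        · exact l1norm_le_sqrt_mul_l2norm hz
    _ = coh U * √k * l2norm x * l2norm z := by ring

/-- norm bound ‖(z* U diag(B̃x))*‖₂ ≤ μ(U)·√k·‖x‖₂·‖z‖₂ for a column-wise
orthonormal B̃ and k-sparse z (equation (13) of the paper). -/
theorem stmt_9 (m nt n k : ℕ) (hm : 0 < m) (hnt : 0 < nt) (hn : 0 < n) (hk : 0 < k)
    (U : Matrix (Fin m) (Fin nt) ℂ)
    (B : Matrix (Fin nt) (Fin n) ℂ) (hB : Bᴴ * B = 1)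
    (x : Fin n → ℂ) (z : Fin m → ℂ) (hz : Sparse k z) :
    l2norm (fun j => star ((∑ i, star (z i) * U i j) * B.mulVec x j)) ≤
      coh U * Real.sqrt k * l2norm x * l2norm z :=
  stmt_9_general m nt n k U B hB x z hz
end
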